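/- arXiv:2311.05218 — 4 statements merged into one kernel-verified Lean document; each statement's English description precedes it below -/
import Mathlib

section
/- Let R be a commutative ring equipped with a unary operation a ↦ a° satisfying a°·a = a, (ab)° = a°·b°, and 0° = 0 for all a, b. Then for every a ∈ R, the annihilator of a equals the principal ideal generated by 1 − a°. -/
theorem stmt_0 {R : Type*} [CommRing R] (op : R → R)
    (h1 : ∀ a : R, op a * a = a)
    (h2 : ∀ a b : R, op (a * b) = op a * op b)
    (h3 : op 0 = 0) (a : R) :
    ∀ x : R, x * a = 0 ↔ x ∈ Ideal.span {1 - op a} := by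
  intro x
  rw [Ideal.mem_span_singleton]
  constructor
  · intro hx
    have h4 : op x * op a = 0 := by rw [← h2, hx, h3]
    have h5 : x * op a = 0 := by
      calc x * op a = (op x * x) * op a := by rw [h1]
        _ = x * (op x * op a) := by ring
        _ = 0 := by rw [h4, mul_zero]
    exact ⟨x, by rw [mul_comm, mul_sub, mul_one, h5, sub_zero]⟩
  · rintro ⟨c, rfl⟩
    have : (1 - op a) * a = 0 := by rw [sub_mul, one_mul, h1, sub_self]
    calc (1 - op a) * c * a = c * ((1 - op a) * a) := by ring
      _ = 0 := by rw [this, mul_zero]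
end

section
/- Let R be a reduced commutative ring and a ∈ R. In the ring R_{a} := R/Ann(a) × R/Ann(Ann(a)), the annihilator of the image ψ_a(a) of a is generated by the idempotent (0, 1). -/
theorem stmt_6 {R : Type*} [CommRing R] [IsReduced R] (a : R) :
    ∀ x : (R ⧸ (Ideal.span {a} : Ideal R).annihilator) ×
        (R ⧸ (Ideal.span {a} : Ideal R).annihilator.annihilator),
      x * (Ideal.Quotient.mk _ a, Ideal.Quotient.mk _ a) = 0 ↔
        x ∈ Ideal.span ({(0, 1)} :
          Set ((R ⧸ (Ideal.span {a} : Ideal R).annihilator) ×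
            (R ⧸ (Ideal.span {a} : Ideal R).annihilator.annihilator))) := by
  intro x
  rw [Ideal.mem_span_singleton]
  constructor
  · intro h
    have h1 : x.1 * Ideal.Quotient.mk _ a = 0 := congrArg Prod.fst h
    have hx1 : x.1 = 0 := by
      obtain ⟨r, hr⟩ := Ideal.Quotient.mk_surjective x.1
      rw [← hr] at h1 ⊢
      rw [← map_mul, Ideal.Quotient.eq_zero_iff_mem, Submodule.mem_annihilator] at h1
      have := h1 a (Ideal.mem_span_singleton_self a)
      simp only [smul_eq_mul] at this
      have : (r * a) * (r * a) = 0 := by ring_nf; ring_nf at this; rw [mul_comm] at this ⊢; linear_combination r * this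
      have hra : r * a = 0 := IsReduced.eq_zero _ ⟨2, by rw [pow_two]; exact this⟩
      rw [Ideal.Quotient.eq_zero_iff_mem, Submodule.mem_annihilator]
      intro n hn
      rw [Ideal.mem_span_singleton] at hn
      obtain ⟨c, rfl⟩ := hn
      simp only [smul_eq_mul]
      rw [show r * (a * c) = (r * a) * c by ring, hra, zero_mul]
    exact ⟨(0, x.2), by ext <;> simp [hx1]⟩
  · rintro ⟨c, rfl⟩
    have : ((0, 1) * c : _ × _) = (0, c.2) := by ext <;> simp
    rw [this]
    ext
    · simp
    · simp only [Prod.snd_mul, Prod.snd_zero]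
      obtain ⟨r, hr⟩ := Ideal.Quotient.mk_surjective c.2
      rw [← hr]
      rw [← map_mul, Ideal.Quotient.eq_zero_iff_mem, Submodule.mem_annihilator]
      intro s hs
      rw [Submodule.mem_annihilator] at hs
      have hsa : s * a = 0 := hs a (Ideal.mem_span_singleton_self a)
      simp only [smul_eq_mul]
      rw [show r * a * s = (s * a) * r by ring, hsa, zero_mul]
end

section
/- Krull dimension ≤ 1 via algebraic identities: if a commutative ring R satisfies that for all x₀, x₁ ∈ R there exist natural numbers e₀, e₁ and c₀, c₁ ∈ R with x₀^{e₀}·(x₁^{e₁}·(1 + c₁x₁) + c₀x₀) = 0, then every chain of prime ideals 𝔭₀ ⊊ 𝔭₁ ⊊ 𝔭₂ in R leads to a contradiction, i.e., Krull dimension of R is at most 1. -/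
theorem stmt_15 {R : Type*} [CommRing R]
    (h : ∀ x₀ x₁ : R, ∃ (e₀ e₁ : ℕ) (c₀ c₁ : R),
      x₀ ^ e₀ * (x₁ ^ e₁ * (1 + c₁ * x₁) + c₀ * x₀) = 0) :
    ¬ ∃ 𝔭₀ 𝔭₁ 𝔭₂ : Ideal R, 𝔭₀.IsPrime ∧ 𝔭₁.IsPrime ∧ 𝔭₂.IsPrime ∧
      𝔭₀ < 𝔭₁ ∧ 𝔭₁ < 𝔭₂ := by
  rintro ⟨𝔭₀, 𝔭₁, 𝔭₂, h₀, h₁, h₂, l01, l12⟩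
  obtain ⟨x₀, hx₀1, hx₀0⟩ := SetLike.exists_of_lt l01
  obtain ⟨x₁, hx₁2, hx₁1⟩ := SetLike.exists_of_lt l12
  obtain ⟨e₀, e₁, c₀, c₁, heq⟩ := h x₀ x₁
  have h1 : x₀ ^ e₀ * (x₁ ^ e₁ * (1 + c₁ * x₁) + c₀ * x₀) ∈ 𝔭₀ := heq ▸ 𝔭₀.zero_mem
  have h2 : x₁ ^ e₁ * (1 + c₁ * x₁) + c₀ * x₀ ∈ 𝔭₀ := by
    rcases h₀.mem_or_mem h1 with hp | hp
    · exact absurd (h₀.mem_of_pow_mem _ hp) hx₀0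
    · exact hp
  have h3 : x₁ ^ e₁ * (1 + c₁ * x₁) ∈ 𝔭₁ := by
    have := l01.le h2
    have hc : c₀ * x₀ ∈ 𝔭₁ := 𝔭₁.mul_mem_left _ hx₀1
    simpa using 𝔭₁.sub_mem this hc
  have h4 : 1 + c₁ * x₁ ∈ 𝔭₁ := by
    rcases h₁.mem_or_mem h3 with hp | hp
    · exact absurd (h₁.mem_of_pow_mem _ hp) hx₁1
    · exact hp
  have h5 : (1 : R) ∈ 𝔭₂ := by
    have := l12.le h4
    have hc : c₁ * x₁ ∈ 𝔭₂ := 𝔭₂.mul_mem_left _ hx₁2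
    simpa using 𝔭₂.sub_mem this hc
  exact h₂.ne_top (𝔭₂.eq_top_of_isUnit_mem h5 isUnit_one)
end

section
/- Conversely, if R is a commutative ring of Krull dimension ≤ 1 (in the classical sense), then for all x₀, x₁ ∈ R there exist e₀, e₁ ∈ ℕ and c₀, c₁ ∈ R with x₀^{e₀}·(x₁^{e₁}·(1 + c₁x₁) + c₀x₀) = 0. -/
/-!
Let `U(S, x) = x^ℕ (S + x R)` be the upper boundary monoid of `x` over a monoid `S`. If a prime `p`
avoids `U(S, x)`, then `p + (x)` still avoids `S`, so it extends to a prime `p'` avoiding `S`, and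
`p < p'` because `x ∈ U(S, x)`. If the identity failed for `x₀, x₁`, then `0 ∉ U(U(1, x₁), x₀)`,
and two such steps starting from a prime avoiding `U(U(1, x₁), x₀)` give a chain `p₀ < p₁ < p₂`
of primes, contradicting dimension `≤ 1`.
-/

namespace Submonoid

variable {R : Type*} [CommRing R]

def upperBoundary (S : Submonoid R) (x : R) : Submonoid R where
  carrier := {r | ∃ (e : ℕ) (s : R) (c : R), s ∈ S ∧ r = x ^ e * (s + c * x)}
  one_mem' := ⟨0, 1, 0, S.one_mem, by ring⟩
  mul_mem' := by
    rintro _ _ ⟨e, s, c, hs, rfl⟩ ⟨e', s', c', hs', rfl⟩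
    exact ⟨e + e', s * s', c * s' + s * c' + c * c' * x, S.mul_mem hs hs', by ring⟩

theorem self_mem_upperBoundary (S : Submonoid R) (x : R) : x ∈ S.upperBoundary x :=
  ⟨1, 1, 0, S.one_mem, by ring⟩

theorem sub_mul_mem_upperBoundary {S : Submonoid R} {s : R} (hs : s ∈ S) (x c : R) :
    s - c * x ∈ S.upperBoundary x :=
  ⟨0, s, -c, hs, by ring⟩

theorem mem_upperBoundary_upperBoundary_bot {x₀ x₁ r : R} :
    r ∈ ((⊥ : Submonoid R).upperBoundary x₁).upperBoundary x₀ ↔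
      ∃ (e₀ e₁ : ℕ) (c₀ c₁ : R), r = x₀ ^ e₀ * (x₁ ^ e₁ * (1 + c₁ * x₁) + c₀ * x₀) := by
  constructor
  · rintro ⟨e₀, _, c₀, ⟨e₁, _, c₁, rfl, rfl⟩, rfl⟩
    exact ⟨e₀, e₁, c₀, c₁, rfl⟩
  · rintro ⟨e₀, e₁, c₀, c₁, rfl⟩
    exact ⟨e₀, _, c₀, ⟨e₁, 1, c₁, rfl, rfl⟩, rfl⟩

end Submonoid

namespace Ideal

variable {R : Type*} [CommRing R]

theorem exists_isPrime_gt_disjoint_of_disjoint_upperBoundary {p : Ideal R} {S : Submonoid R}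
    {x : R} (hp : Disjoint (p : Set R) (S.upperBoundary x)) :
    ∃ p' : Ideal R, p'.IsPrime ∧ p < p' ∧ Disjoint (p' : Set R) S := by
  have hx : x ∉ p := Set.disjoint_right.mp hp (S.self_mem_upperBoundary x)
  have hpx : Disjoint ((p ⊔ span {x} : Ideal R) : Set R) S := by
    refine Set.disjoint_left.mpr fun r hr hrS ↦ ?_
    obtain ⟨y, hy, _, hz, rfl⟩ := Submodule.mem_sup.mp hr
    obtain ⟨c, rfl⟩ := mem_span_singleton'.mp hz
    have : y = (y + c * x) - c * x := by ring
    exact Set.disjoint_left.mp hp hy (this ▸ Submonoid.sub_mul_mem_upperBoundary hrS x c)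
  obtain ⟨p', hp', hle, hp'S⟩ := exists_le_prime_disjoint _ S hpx
  have hxp' : x ∈ p' := hle (mem_sup_right (mem_span_singleton_self x))
  exact ⟨p', hp', lt_of_le_of_ne (le_sup_left.trans hle) (by rintro rfl; exact hx hxp'), hp'S⟩

end Ideal

theorem not_ringKrullDim_le_one_of_lt_of_lt {R : Type*} [CommRing R] {p₀ p₁ p₂ : Ideal R}
    [p₀.IsPrime] [p₁.IsPrime] [p₂.IsPrime] (h₀₁ : p₀ < p₁) (h₁₂ : p₁ < p₂) :
    ¬ ringKrullDim R ≤ 1 := by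
  intro h
  rcases Order.krullDim_le_one_iff.mp h ⟨p₁, ‹_›⟩ with hmin | hmax
  · exact not_isMin_of_lt (show (⟨p₀, ‹_›⟩ : PrimeSpectrum R) < ⟨p₁, ‹_›⟩ from h₀₁) hmin
  · exact not_isMax_of_lt (show (⟨p₁, ‹_›⟩ : PrimeSpectrum R) < ⟨p₂, ‹_›⟩ from h₁₂) hmax

theorem stmt_16 {R : Type*} [CommRing R] (h : ringKrullDim R ≤ 1) :
    ∀ x₀ x₁ : R, ∃ (e₀ e₁ : ℕ) (c₀ c₁ : R),
      x₀ ^ e₀ * (x₁ ^ e₁ * (1 + c₁ * x₁) + c₀ * x₀) = 0 := by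
  intro x₀ x₁
  by_contra hc
  have h0 : (0 : R) ∉ ((⊥ : Submonoid R).upperBoundary x₁).upperBoundary x₀ := fun h0 ↦ by
    obtain ⟨e₀, e₁, c₀, c₁, he⟩ := Submonoid.mem_upperBoundary_upperBoundary_bot.mp h0
    exact hc ⟨e₀, e₁, c₀, c₁, he.symm⟩
  obtain ⟨p₀, hp₀, -, hd₀⟩ := Ideal.exists_le_prime_disjoint ⊥ _
    (Set.disjoint_left.mpr fun r hr ↦ (Submodule.mem_bot R).mp hr ▸ h0)
  obtain ⟨p₁, hp₁, h₀₁, hd₁⟩ := Ideal.exists_isPrime_gt_disjoint_of_disjoint_upperBoundary hd₀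
  obtain ⟨p₂, hp₂, h₁₂, -⟩ := Ideal.exists_isPrime_gt_disjoint_of_disjoint_upperBoundary hd₁
  exact not_ringKrullDim_le_one_of_lt_of_lt h₀₁ h₁₂ h
end
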